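/- arXiv:1705.01529 — 4 statements merged into one kernel-verified Lean document; each statement's English description precedes it below -/
import Mathlib

section
/- Fix n ∈ ℕ and γ ∈ (0, 1). Then there exists c ∈ (0,∞)^n with geometric mean (∏_{k=1}^n c_k)^{1/n} = γ such that ν₊(c) = 1 and ν̄(c) = 1. -/
open Polynomial

noncomputable def Pc {n : ℕ} (c : Fin n → ℝ) : Polynomial ℂ :=
  ∏ k, (X + C (c k : ℂ))

noncomputable def nuPlus {n : ℕ} (c : Fin n → ℝ) : ℕ :=
  Multiset.card ((Pc c - 1).roots.filter (fun z => 0 < z.re))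

noncomputable def nuBar {n : ℕ} (c : Fin n → ℝ) : ℕ :=
  Multiset.card ((Pc c - 1).roots.filter (fun z => 0 ≤ z.re))

lemma prod_aux (n : ℕ) (a δ : ℝ) :
    ∏ k ∈ Finset.range n, (a * δ ^ (2*k)) = a ^ n * δ ^ (n*(n-1)) := by
  rw [Finset.prod_mul_distrib, Finset.prod_const, Finset.card_range,
    Finset.prod_pow_eq_pow_sum]
  congr 1
  rw [← Finset.sum_range_id_mul_two n, Finset.sum_mul]
  congr 1
  exact Finset.sum_congr rfl (fun i _ => by ring)

lemma key_ineq (n j : ℕ) (hj1 : 1 ≤ j) (hjn : j ≤ n) (a δ : ℝ) (ha : 0 < a) (hδ : 2 ≤ δ)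
    (hbase : 2 ≤ δ * ∏ k ∈ Finset.range n, (a/2 * δ ^ (2*k))) :
    2 ≤ (-1:ℝ)^j * ∏ k ∈ Finset.range n, (-(a*δ^(2*j-1)) + a*δ^(2*k)) := by
  have hδ0 : (0:ℝ) < δ := by linarith
  have hδ1 : (1:ℝ) ≤ δ := by linarith
  have hfilter : (Finset.range n).filter (fun k => k < j) = Finset.range j := by
    ext k; simp only [Finset.mem_filter, Finset.mem_range]; omega
  have hsign : (-1:ℝ)^j * ∏ k ∈ Finset.range n, (-(a*δ^(2*j-1)) + a*δ^(2*k))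
      = ∏ k ∈ Finset.range n,
        ((if k < j then (-1:ℝ) else 1) * (-(a*δ^(2*j-1)) + a*δ^(2*k))) := by
    rw [Finset.prod_mul_distrib]
    congr 1
    rw [Finset.prod_ite (fun _ => (-1:ℝ)) (fun _ => (1:ℝ)), Finset.prod_const,
      Finset.prod_const, hfilter, Finset.card_range, one_pow, mul_one]
  rw [hsign]
  -- lower bounds for each factor
  set b : ℕ → ℝ := fun k => if k < j then a/2 * δ^(2*j-1) else a/2 * δ^(2*k) with hb
  have hbpos : ∀ k ∈ Finset.range n, 0 ≤ b k := by
    intro k _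
    by_cases h : k < j <;> simp [hb, h] <;> positivity
  have hble : ∀ k ∈ Finset.range n, b k ≤
      (if k < j then (-1:ℝ) else 1) * (-(a*δ^(2*j-1)) + a*δ^(2*k)) := by
    intro k _
    by_cases h : k < j
    · simp only [hb, h, if_true, if_pos]
      have hpow : δ^(2*k) * δ ≤ δ^(2*j-1) := by
        calc δ^(2*k) * δ = δ^(2*k+1) := by ring
        _ ≤ δ^(2*j-1) := by
          apply pow_le_pow_right₀ hδ1; omega
      have hg : (2:ℝ)*δ^(2*k) ≤ δ^(2*j-1) := by
        nlinarith [pow_nonneg (le_of_lt hδ0) (2*k)]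
      have := mul_le_mul_of_nonneg_left hg ha.le
      linarith
    · simp only [hb, h, if_false, if_neg, one_mul]
      push_neg at h
      have hpow : δ^(2*j-1) * δ ≤ δ^(2*k) := by
        calc δ^(2*j-1) * δ = δ^(2*j-1+1) := by ring
        _ ≤ δ^(2*k) := by
          apply pow_le_pow_right₀ hδ1; omega
      have hg : (2:ℝ)*δ^(2*j-1) ≤ δ^(2*k) := by
        nlinarith [pow_nonneg (le_of_lt hδ0) (2*j-1)]
      have := mul_le_mul_of_nonneg_left hg ha.le
      linarith
  have h1 : ∏ k ∈ Finset.range n, b k ≤ ∏ k ∈ Finset.range n,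
      ((if k < j then (-1:ℝ) else 1) * (-(a*δ^(2*j-1)) + a*δ^(2*k))) :=
    Finset.prod_le_prod hbpos hble
  refine le_trans ?_ h1
  -- ∏ b ≥ δ * ∏ (a/2 δ^{2k})
  have hjmem : j - 1 ∈ Finset.range n := by simp; omega
  have hsplit : ∏ k ∈ Finset.range n, b k
      = b (j-1) * ∏ k ∈ (Finset.range n).erase (j-1), b k :=
    (Finset.mul_prod_erase _ _ hjmem).symm
  have hsplit' : ∏ k ∈ Finset.range n, (a/2 * δ^(2*k))
      = (a/2 * δ^(2*(j-1))) * ∏ k ∈ (Finset.range n).erase (j-1), (a/2 * δ^(2*k)) :=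
    (Finset.mul_prod_erase _ _ hjmem).symm
  have hbj : b (j-1) = δ * (a/2 * δ^(2*(j-1))) := by
    have : j - 1 < j := by omega
    simp only [hb, this, if_pos]
    have : 2*j-1 = 2*(j-1)+1 := by omega
    rw [this, pow_succ]; ring
  have hbk : ∀ k ∈ (Finset.range n).erase (j-1), a/2 * δ^(2*k) ≤ b k := by
    intro k _
    by_cases h : k < j
    · simp only [hb, h, if_pos]
      have : δ^(2*k) ≤ δ^(2*j-1) := by
        apply pow_le_pow_right₀ hδ1; omega
      nlinarith
    · simp [hb, h]
  have h2 : ∏ k ∈ (Finset.range n).erase (j-1), (a/2 * δ^(2*k))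
      ≤ ∏ k ∈ (Finset.range n).erase (j-1), b k := by
    apply Finset.prod_le_prod
    · intro k _; positivity
    · exact hbk
  have hpp : 0 ≤ ∏ k ∈ (Finset.range n).erase (j-1), (a/2 * δ^(2*k)) := by
    apply Finset.prod_nonneg; intro k _; positivity
  calc (2:ℝ) ≤ δ * ∏ k ∈ Finset.range n, (a/2 * δ^(2*k)) := hbase
  _ = b (j-1) * ∏ k ∈ (Finset.range n).erase (j-1), (a/2 * δ^(2*k)) := by
      rw [hsplit', hbj]; ring
  _ ≤ b (j-1) * ∏ k ∈ (Finset.range n).erase (j-1), b k := by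
      have hbj0 : 0 ≤ b (j-1) := by rw [hbj]; positivity
      exact mul_le_mul_of_nonneg_left h2 hbj0
  _ = ∏ k ∈ Finset.range n, b k := hsplit.symm

/-- for each `n ≥ 1` and `γ ∈ (0,1)` there is `c ∈ (0,∞)ⁿ` with
geometric mean `γ` such that `ν₊(c) = ν̄(c) = 1`. -/
theorem stmt14 (n : ℕ) (hn : 1 ≤ n) (γ : ℝ) (hγ0 : 0 < γ) (hγ1 : γ < 1) :
    ∃ c : Fin n → ℝ, (∀ k, 0 < c k) ∧ (∏ k, c k) = γ ^ n ∧
      nuPlus c = 1 ∧ nuBar c = 1 := by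
  have hγlt : γ^n < 1 := pow_lt_one₀ hγ0.le hγ1 (by omega)
  have hγn : (0:ℝ) < γ^n := pow_pos hγ0 n
  set δ : ℝ := 2 * (2/γ)^n with hδdef
  have h2γ : (2:ℝ) ≤ 2/γ := by rw [le_div_iff₀ hγ0]; linarith
  have hδ2 : (2:ℝ) ≤ δ := by
    have h : (1:ℝ) ≤ (2/γ)^n := one_le_pow₀ (by linarith)
    rw [hδdef]; linarith
  have hδ0 : (0:ℝ) < δ := by linarith
  have hδ1 : (1:ℝ) < δ := by linarith
  have hδn0 : δ ≠ 0 := ne_of_gt hδ0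
  set a : ℝ := γ / δ^(n-1) with hadef
  have ha : 0 < a := div_pos hγ0 (pow_pos hδ0 _)
  set c : Fin n → ℝ := fun k => a * δ^(2*(k:ℕ)) with hcdef
  have hcpos : ∀ k, 0 < c k := fun k => mul_pos ha (pow_pos hδ0 _)
  have hpowmul : (δ^(n-1))^n = δ^(n*(n-1)) := by rw [← pow_mul, Nat.mul_comm]
  have han : a^n * δ^(n*(n-1)) = γ^n := by
    rw [hadef, div_pow, hpowmul, div_mul_cancel₀]
    exact pow_ne_zero _ hδn0
  have hprodc : (∏ k, c k) = γ^n := by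
    rw [hcdef, Fin.prod_univ_eq_prod_range (fun k => a * δ^(2*k)) n, prod_aux, han]
  have hbase : 2 ≤ δ * ∏ k ∈ Finset.range n, (a/2 * δ ^ (2*k)) := by
    have h1 : ∏ k ∈ Finset.range n, (a/2 * δ ^ (2*k)) = γ^n / 2^n := by
      rw [prod_aux, div_pow, div_mul_eq_mul_div, han]
    have h2 : δ * (γ^n/2^n) = 2 := by
      rw [hδdef, div_pow]
      field_simp
    rw [h1, h2]
  -- the real polynomial
  set p : Polynomial ℝ := (∏ k : Fin n, (X + C (c k))) - 1 with hpdef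
  have hevp : ∀ x : ℝ, p.eval x = (∏ k ∈ Finset.range n, (x + a * δ^(2*k))) - 1 := by
    intro x
    rw [hpdef]
    simp only [eval_sub, eval_one, eval_prod, eval_add, eval_X, eval_C]
    rw [Fin.prod_univ_eq_prod_range (fun k => x + a * δ^(2*k)) n]
  have hdegprod : (∏ k : Fin n, (X + C (c k))).natDegree = n := by
    rw [natDegree_prod_of_monic _ _ (fun k _ => monic_X_add_C _)]
    simp [natDegree_X_add_C]
  have hdeg : p.natDegree = n := by
    rw [hpdef, ← C_1, natDegree_sub_C, hdegprod]
  have hp0 : p ≠ 0 := by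
    intro h
    rw [h, natDegree_zero] at hdeg
    omega
  -- test points
  set u : ℕ → ℝ := fun j => -(a * δ^(2*j-1)) with hudef
  have huneg : ∀ j, u j < 0 := fun j => neg_neg_iff_pos.mpr (mul_pos ha (pow_pos hδ0 _))
  have humono : ∀ i j, 1 ≤ i → i ≤ j → u j ≤ u i := by
    intro i j hi hij
    rw [hudef]
    simp only [neg_le_neg_iff]
    have := pow_le_pow_right₀ (le_of_lt hδ1) (by omega : 2*i-1 ≤ 2*j-1)
    nlinarith
  have hustrict : ∀ j, 1 ≤ j → u (j+1) < u j := by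
    intro j hj
    rw [hudef]
    simp only [neg_lt_neg_iff]
    have := pow_lt_pow_right₀ hδ1 (by omega : 2*j-1 < 2*(j+1)-1)
    nlinarith
  -- sign facts
  have hsign : ∀ j, 1 ≤ j → j ≤ n → 2 ≤ (-1:ℝ)^j * (p.eval (u j) + 1) := by
    intro j hj1 hjn
    have := key_ineq n j hj1 hjn a δ ha hδ2 hbase
    rw [hevp (u j)]
    have he : ∀ k : ℕ, u j + a * δ^(2*k) = -(a*δ^(2*j-1)) + a*δ^(2*k) := fun k => rfl
    simp only [sub_add_cancel]
    convert this using 3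
  have hsign_even : ∀ j, 1 ≤ j → j ≤ n → Even j → 1 ≤ p.eval (u j) := by
    intro j h1 h2 h3
    have := hsign j h1 h2
    rw [h3.neg_one_pow, one_mul] at this
    linarith
  have hsign_odd : ∀ j, 1 ≤ j → j ≤ n → Odd j → p.eval (u j) ≤ -1 := by
    intro j h1 h2 h3
    have := hsign j h1 h2
    rw [h3.neg_one_pow, neg_one_mul] at this
    linarith
  -- eval at 0 and 2
  have hev0 : p.eval 0 < 0 := by
    rw [hevp 0]
    simp only [zero_add]
    have : ∏ k ∈ Finset.range n, (a * δ^(2*k)) = γ^n := by rw [prod_aux, han]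
    rw [this]
    linarith
  have hev2 : 0 < p.eval 2 := by
    rw [hevp 2]
    have h1 : (2:ℝ)^n ≤ ∏ k ∈ Finset.range n, ((2:ℝ) + a * δ^(2*k)) := by
      calc (2:ℝ)^n = ∏ k ∈ Finset.range n, (2:ℝ) := by rw [Finset.prod_const, Finset.card_range]
      _ ≤ ∏ k ∈ Finset.range n, ((2:ℝ) + a * δ^(2*k)) := by
        apply Finset.prod_le_prod (fun k _ => by norm_num)
        intro k _
        have := mul_pos ha (pow_pos hδ0 (2*k))
        linarith
    have h2 : (2:ℝ) ≤ 2^n := by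
      calc (2:ℝ) = 2^1 := (pow_one 2).symm
      _ ≤ 2^n := pow_le_pow_right₀ (by norm_num) hn
    linarith
  -- IVT roots
  have hcont : ∀ A B : ℝ, ContinuousOn (fun x => p.eval x) (Set.Icc A B) :=
    fun A B => p.continuous.continuousOn
  have hroot0 : ∃ x ∈ Set.Ioo (0:ℝ) 2, p.eval x = 0 := by
    obtain ⟨x, hx, hx0⟩ := intermediate_value_Ioo (by norm_num : (0:ℝ) ≤ 2) (hcont 0 2)
      (⟨hev0, hev2⟩ : (0:ℝ) ∈ Set.Ioo (p.eval 0) (p.eval 2))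
    exact ⟨x, hx, hx0⟩
  have hrootj : ∀ j, 1 ≤ j → j + 1 ≤ n → ∃ x ∈ Set.Ioo (u (j+1)) (u j), p.eval x = 0 := by
    intro j h1 h2
    have hle : u (j+1) ≤ u j := (hustrict j h1).le
    rcases Nat.even_or_odd j with he | ho
    · have hA : p.eval (u (j+1)) ≤ -1 := hsign_odd (j+1) (by omega) h2 (Even.add_one he)
      have hB : 1 ≤ p.eval (u j) := hsign_even j h1 (by omega) he
      obtain ⟨x, hx, hx0⟩ := intermediate_value_Ioo hle (hcont _ _)
        (⟨by linarith, by linarith⟩ : (0:ℝ) ∈ Set.Ioo (p.eval (u (j+1))) (p.eval (u j)))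
      exact ⟨x, hx, hx0⟩
    · have hA : 1 ≤ p.eval (u (j+1)) := hsign_even (j+1) (by omega) h2 (Odd.add_one ho)
      have hB : p.eval (u j) ≤ -1 := hsign_odd j h1 (by omega) ho
      obtain ⟨x, hx, hx0⟩ := intermediate_value_Ioo' hle (hcont _ _)
        (⟨by linarith, by linarith⟩ : (0:ℝ) ∈ Set.Ioo (p.eval (u j)) (p.eval (u (j+1))))
      exact ⟨x, hx, hx0⟩
  have hex : ∀ j : ℕ, ∃ x : ℝ, (j = 0 ∧ j < n → x ∈ Set.Ioo (0:ℝ) 2 ∧ p.eval x = 0)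
      ∧ (1 ≤ j ∧ j < n → x ∈ Set.Ioo (u (j+1)) (u j) ∧ p.eval x = 0) := by
    intro j
    rcases Nat.eq_zero_or_pos j with rfl | hj
    · obtain ⟨x, hx, hx0⟩ := hroot0
      exact ⟨x, fun _ => ⟨hx, hx0⟩, fun h => absurd h (by omega)⟩
    · by_cases hjn : j < n
      · obtain ⟨x, hx, hx0⟩ := hrootj j hj (by omega)
        exact ⟨x, fun h => absurd h (by omega), fun _ => ⟨hx, hx0⟩⟩
      · exact ⟨0, fun h => absurd h (by omega), fun h => absurd h (by omega)⟩
  choose s hs0 hs1 using hex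
  have hs00 : s 0 ∈ Set.Ioo (0:ℝ) 2 := (hs0 0 ⟨rfl, by omega⟩).1
  have hroots_eval : ∀ j, j < n → p.eval (s j) = 0 := by
    intro j hj
    rcases Nat.eq_zero_or_pos j with rfl | hj1
    · exact (hs0 0 ⟨rfl, hj⟩).2
    · exact (hs1 j ⟨hj1, hj⟩).2
  have hsneg : ∀ j, 1 ≤ j → j < n → s j < 0 := by
    intro j h1 h2
    have : s j < u j := ((hs1 j ⟨h1, h2⟩).1).2
    linarith [huneg j]
  have horder : ∀ i j, i < j → j < n → s j < s i := by
    intro i j hij hjn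
    have hj1 : 1 ≤ j := by omega
    have hsju : s j < u j := ((hs1 j ⟨hj1, hjn⟩).1).2
    rcases Nat.eq_zero_or_pos i with rfl | hi
    · have h1 := hs00.1
      have h2 := huneg j
      linarith
    · have h3 : u j ≤ u (i+1) := humono (i+1) j (by omega) (by omega)
      have h4 : u (i+1) < s i := ((hs1 i ⟨hi, by omega⟩).1).1
      linarith
  -- the multiset of roots
  set M : Multiset ℝ := (Finset.range n).val.map s with hMdef
  have hMnodup : M.Nodup := by
    apply Multiset.Nodup.map_on _ (Finset.range n).nodup
    intro x hx y hy hxy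
    rw [Finset.mem_val, Finset.mem_range] at hx hy
    by_contra hne
    rcases lt_or_gt_of_ne hne with h | h
    · exact absurd hxy (ne_of_gt (horder x y h hy))
    · exact absurd hxy.symm (ne_of_gt (horder y x h hx))
  have hMcard : Multiset.card M = n := by
    rw [hMdef, Multiset.card_map]
    exact Finset.card_range n
  have hMle : M ≤ p.roots := by
    rw [Multiset.le_iff_subset hMnodup]
    intro x hx
    rw [hMdef, Multiset.mem_map] at hx
    obtain ⟨j, hj, rfl⟩ := hx
    rw [Finset.mem_val, Finset.mem_range] at hj
    rw [mem_roots hp0]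
    exact hroots_eval j hj
  have hMeq : p.roots = M := by
    refine (Multiset.eq_of_le_of_card_le hMle ?_).symm
    rw [hMcard, ← hdeg]
    exact p.card_roots'
  have hsplits : p.Splits :=
    splits_iff_card_roots.mpr (by rw [hMeq, hMcard, hdeg])
  -- complex side
  have hmap : Pc c - 1 = p.map (algebraMap ℝ ℂ) := by
    rw [hpdef, Polynomial.map_sub, Polynomial.map_one, Polynomial.map_prod]
    unfold Pc
    congr 1
    refine Finset.prod_congr rfl fun k _ => ?_
    rw [Polynomial.map_add, Polynomial.map_X, Polynomial.map_C]
    norm_cast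
  have hrootsC : (Pc c - 1).roots = M.map (fun x : ℝ => (x : ℂ)) := by
    rw [hmap, hsplits.roots_map, hMeq, Complex.coe_algebraMap]
  -- counting
  have hsingle_lt : (Finset.range n).filter (fun j => 0 < s j) = {0} := by
    ext j
    simp only [Finset.mem_filter, Finset.mem_range, Finset.mem_singleton]
    constructor
    · rintro ⟨hj, hsj⟩
      by_contra h
      exact absurd hsj (not_lt.mpr (hsneg j (by omega) hj).le)
    · rintro rfl
      exact ⟨by omega, hs00.1⟩
  have hsingle_le : (Finset.range n).filter (fun j => 0 ≤ s j) = {0} := by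
    ext j
    simp only [Finset.mem_filter, Finset.mem_range, Finset.mem_singleton]
    constructor
    · rintro ⟨hj, hsj⟩
      by_contra h
      exact absurd hsj (not_le.mpr (hsneg j (by omega) hj))
    · rintro rfl
      exact ⟨by omega, hs00.1.le⟩
  have hcount : ∀ q : ℝ → Prop, ∀ _ : DecidablePred q,
      (Finset.range n).filter (fun j => q (s j)) = {0} →
      Multiset.card (((Pc c - 1).roots).filter (fun z => q z.re)) = 1 := by
    intro q hq hfil
    rw [hrootsC, hMdef, Multiset.map_map, ← Multiset.countP_eq_card_filter,
      Multiset.countP_map]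
    have h2 : Multiset.filter (fun j => ((fun z : ℂ => q z.re) ((Function.comp (fun x : ℝ => (x:ℂ)) s) j))) (Finset.range n).val
        = Multiset.filter (fun j => q (s j)) (Finset.range n).val := by
      apply Multiset.filter_congr
      intro j _
      simp
    rw [h2, ← Finset.filter_val, hfil]
    rfl
  refine ⟨c, hcpos, hprodc, ?_, ?_⟩
  · unfold nuPlus
    exact hcount _ _ hsingle_lt
  · unfold nuBar
    exact hcount _ _ hsingle_le
end

section
/- Let n ∈ ℕ with n ≥ 5, let c' ∈ (0,∞)^{n−2} be arbitrary, and let γ ∈ (0, 1). Then there exist positive reals d₀ and d_q with d₀ · (∏_{j=1}^{n−2} c'_j) · d_q = γ^n such that the extended vector c = (d₀, c'_1, …, c'_{n−2}, d_q) ∈ (0,∞)^n (which has geometric mean γ) satisfies ν₊(c) = 1 and ν̄(c) = 1. -/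
open Polynomial

open Complex Finset

lemma arg_le_bound {w : ℂ} (hre : 0 < w.re) (him : 0 < w.im) :
    Complex.arg w ≤ Real.pi / 2 * (w.im / w.re) := by
  have hw : w ≠ 0 := by intro h; rw [h] at hre; simp at hre
  have h1 : 0 ≤ arg w := Complex.arg_nonneg_iff.2 him.le
  have h2 : arg w < Real.pi / 2 := Complex.arg_lt_pi_div_two_iff.2 (Or.inl hre)
  have h3 : 2 / Real.pi * arg w ≤ Real.sin (arg w) := Real.mul_le_sin h1 h2.le
  have h4 : Real.sin (arg w) = w.im / ‖w‖ := Complex.sin_arg w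
  have h5 : w.im / ‖w‖ ≤ w.im / w.re :=
    div_le_div_of_nonneg_left him.le hre (Complex.re_le_norm w)
  have h6 : 2 / Real.pi * arg w ≤ w.im / w.re := by rw [h4] at h3; linarith
  have hpi := Real.pi_pos
  calc arg w = Real.pi / 2 * (2 / Real.pi * arg w) := by field_simp
    _ ≤ Real.pi / 2 * (w.im / w.re) := by
        apply mul_le_mul_of_nonneg_left h6 (by positivity)

lemma arg_prod_eq {ι : Type*} (s : Finset ι) (w : ι → ℂ)
    (hre : ∀ i ∈ s, 0 < (w i).re) (him : ∀ i ∈ s, 0 < (w i).im)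
    (hsum : ∑ i ∈ s, Complex.arg (w i) < Real.pi) :
    Complex.arg (∏ i ∈ s, w i) = ∑ i ∈ s, Complex.arg (w i) := by
  induction s using Finset.cons_induction with
  | empty => simp
  | cons a t ha ih =>
    have hargnn : ∀ i ∈ t, 0 ≤ arg (w i) := fun i hi =>
      Complex.arg_nonneg_iff.2 (him i (Finset.mem_cons_of_mem hi)).le
    have hne : ∀ i ∈ Finset.cons a t ha, w i ≠ 0 := by
      intro i hi h0
      have := hre i hi; rw [h0] at this; simp at this
    have hsub : ∑ i ∈ t, arg (w i) ≤ ∑ i ∈ Finset.cons a t ha, arg (w i) := by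
      rw [Finset.sum_cons]
      have : 0 ≤ arg (w a) := Complex.arg_nonneg_iff.2 (him a (Finset.mem_cons_self a t)).le
      linarith
    have iht := ih (fun i hi => hre i (Finset.mem_cons_of_mem hi))
      (fun i hi => him i (Finset.mem_cons_of_mem hi)) (lt_of_le_of_lt hsub hsum)
    rw [Finset.prod_cons, Finset.sum_cons]
    rw [Complex.arg_mul (hne a (Finset.mem_cons_self a t))
      (Finset.prod_ne_zero_iff.2 fun i hi => hne i (Finset.mem_cons_of_mem hi)) ?_, iht]
    constructor
    · have h1 : 0 ≤ arg (w a) := Complex.arg_nonneg_iff.2 (him a (Finset.mem_cons_self a t)).le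
      have h2 : 0 ≤ arg (∏ i ∈ t, w i) := by
        rw [iht]; exact Finset.sum_nonneg hargnn
      have := Real.pi_pos
      linarith
    · rw [iht]
      rw [Finset.sum_cons] at hsum
      linarith

lemma abs_le_abs_add {z : ℂ} (hre : 0 ≤ z.re) {c : ℝ} (hc : 0 ≤ c) :
    ‖z‖ ≤ ‖z + (c:ℂ)‖ := by
  have h2 : (‖z‖)^2 ≤ (‖z + (c:ℂ)‖)^2 := by
    simp only [Complex.sq_norm, Complex.normSq_apply, Complex.add_re, Complex.add_im,
      Complex.ofReal_re, Complex.ofReal_im, add_zero]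
    nlinarith
  exact le_of_pow_le_pow_left₀ two_ne_zero (norm_nonneg _) h2

lemma le_abs_add {z : ℂ} (hre : 0 ≤ z.re) (c : ℝ) :
    c ≤ ‖z + (c:ℂ)‖ := by
  have := Complex.re_le_norm (z + (c:ℂ))
  simp only [Complex.add_re, Complex.ofReal_re] at this
  linarith

lemma no_root_im_pos (N : ℕ) (hN : 0 < N) (c : Fin (N+1) → ℝ) (hc : ∀ k, 0 < c k)
    (s0 ε : ℝ) (hs0 : 0 < s0)
    (hεdef : ε = s0 / (2 * (N:ℝ) * Real.pi))
    (hlarge : ∀ k, k ≠ Fin.last N → s0 ≤ c k)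
    (hd0E : 1/ε^N ≤ c 0)
    (z : ℂ) (hre : 0 ≤ z.re) (him : 0 < z.im)
    (hprod : ∏ k, (z + ((c k : ℝ) : ℂ)) = 1) : False := by
  have hπ := Real.pi_pos
  have hNpos : (0:ℝ) < N := by exact_mod_cast hN
  have hε : 0 < ε := by rw [hεdef]; positivity
  have h0ne : (0 : Fin (N+1)) ≠ Fin.last N := by
    intro h
    have := congrArg Fin.val h
    simp [Fin.last] at this
    omega
  -- modulus bound : abs z ≤ ε
  have habs : ‖z‖ ≤ ε := by
    have habsprod : ∏ k, ‖z + ((c k : ℝ):ℂ)‖ = 1 := by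
      rw [← norm_prod, hprod, norm_one]
    have hsplit : ∏ k, ‖z + ((c k : ℝ):ℂ)‖ =
        ‖z + ((c 0 : ℝ):ℂ)‖ * ∏ k ∈ Finset.univ.erase 0, ‖z + ((c k : ℝ):ℂ)‖ :=
      (Finset.mul_prod_erase _ _ (Finset.mem_univ 0)).symm
    have hrest : (‖z‖)^N ≤ ∏ k ∈ Finset.univ.erase 0, ‖z + ((c k : ℝ):ℂ)‖ := by
      have hcard : (Finset.univ.erase (0 : Fin (N+1))).card = N := by
        rw [Finset.card_erase_of_mem (Finset.mem_univ _)]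
        simp
      calc (‖z‖)^N = ∏ _k ∈ Finset.univ.erase (0 : Fin (N+1)), ‖z‖ := by
            rw [Finset.prod_const, hcard]
        _ ≤ _ := Finset.prod_le_prod (fun i _ => norm_nonneg _)
            (fun i _ => abs_le_abs_add hre (hc i).le)
    have hc0 : c 0 ≤ ‖z + ((c 0 : ℝ):ℂ)‖ := le_abs_add hre _
    have hE : 0 < ε^N := by positivity
    have hd0pos : 0 < c 0 := hc 0
    have key : c 0 * (‖z‖)^N ≤ 1 := by
      calc c 0 * (‖z‖)^N ≤
          ‖z + ((c 0 : ℝ):ℂ)‖ * ∏ k ∈ Finset.univ.erase 0, ‖z + ((c k : ℝ):ℂ)‖ := by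
            apply mul_le_mul hc0 hrest (by positivity) (norm_nonneg _)
        _ = 1 := by rw [← hsplit, habsprod]
    have hAN : (‖z‖)^N ≤ ε^N := by
      have h1 : 1 ≤ ε^N * c 0 := by
        rw [div_le_iff₀ hE] at hd0E
        linarith
      nlinarith [pow_nonneg (norm_nonneg z) N]
    exact le_of_pow_le_pow_left₀ (by omega) hε.le hAN
  have hzim : z.im ≤ ε := by
    have h1 : z.im ≤ |z.im| := le_abs_self _
    have h2 : |z.im| ≤ ‖z‖ := Complex.abs_im_le_norm z
    linarith
  -- argument bounds
  have hrepos : ∀ k, 0 < (z + ((c k : ℝ):ℂ)).re := by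
    intro k
    simp only [Complex.add_re, Complex.ofReal_re]
    have := hc k; linarith
  have himpos : ∀ k, 0 < (z + ((c k : ℝ):ℂ)).im := by
    intro k; simpa using him
  have hsmall : ∀ k, k ≠ Fin.last N → Complex.arg (z + ((c k : ℝ):ℂ)) ≤ 1 / (4*N) := by
    intro k hk
    have h1 := arg_le_bound (hrepos k) (himpos k)
    have h2 : (z + ((c k : ℝ):ℂ)).im / (z + ((c k : ℝ):ℂ)).re ≤ ε / s0 := by
      simp only [Complex.add_re, Complex.add_im, Complex.ofReal_re, Complex.ofReal_im, add_zero]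
      apply div_le_div₀ hε.le hzim hs0
      have := hlarge k hk; linarith
    have h3 : Real.pi / 2 * (ε / s0) = 1 / (4*N) := by
      rw [hεdef]
      field_simp
      ring
    calc Complex.arg (z + ((c k : ℝ):ℂ)) ≤ Real.pi / 2 * ((z + ((c k : ℝ):ℂ)).im / (z + ((c k : ℝ):ℂ)).re) := h1
      _ ≤ Real.pi / 2 * (ε / s0) := mul_le_mul_of_nonneg_left h2 (by positivity)
      _ = 1 / (4*N) := h3
  have hlast : Complex.arg (z + ((c (Fin.last N) : ℝ):ℂ)) < Real.pi / 2 :=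
    Complex.arg_lt_pi_div_two_iff.2 (Or.inl (hrepos _))
  have hsumlt : ∑ k, Complex.arg (z + ((c k : ℝ):ℂ)) < Real.pi := by
    rw [← Finset.add_sum_erase _ _ (Finset.mem_univ (Fin.last N))]
    have hrestsum : ∑ k ∈ Finset.univ.erase (Fin.last N), Complex.arg (z + ((c k : ℝ):ℂ)) ≤
        N * (1 / (4*N)) := by
      have hcard : (Finset.univ.erase (Fin.last N)).card = N := by
        rw [Finset.card_erase_of_mem (Finset.mem_univ _)]; simp
      calc ∑ k ∈ Finset.univ.erase (Fin.last N), Complex.arg (z + ((c k : ℝ):ℂ))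
          ≤ ∑ _k ∈ Finset.univ.erase (Fin.last N), 1 / (4*(N:ℝ)) :=
            Finset.sum_le_sum (fun i hi => hsmall i (Finset.ne_of_mem_erase hi))
        _ = N * (1 / (4*N)) := by rw [Finset.sum_const, hcard]; simp
    have hq : (N:ℝ) * (1 / (4*N)) = 1/4 := by field_simp
    have hπ4 : (1:ℝ)/4 + Real.pi / 2 < Real.pi := by nlinarith [Real.pi_gt_three]
    rw [hq] at hrestsum
    linarith
  -- conclude
  have hargeq := arg_prod_eq Finset.univ (fun k => z + ((c k : ℝ):ℂ))
    (fun i _ => hrepos i) (fun i _ => himpos i) hsumlt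
  rw [hprod] at hargeq
  simp only [Complex.arg_one] at hargeq
  have hpos : 0 < ∑ k, Complex.arg (z + ((c k : ℝ):ℂ)) := by
    apply Finset.sum_pos
    · intro i _
      by_contra h
      push_neg at h
      have hnn : 0 ≤ arg (z + ((c i : ℝ):ℂ)) := Complex.arg_nonneg_iff.2 (himpos i).le
      have h0 : arg (z + ((c i : ℝ):ℂ)) = 0 := le_antisymm h hnn
      rw [Complex.arg_eq_zero_iff] at h0
      exact (himpos i).ne' h0.2
    · exact ⟨0, Finset.mem_univ 0⟩
  rw [← hargeq] at hpos
  exact hpos.ne rfl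

lemma real_root_lemma (N : ℕ) (hN : 0 < N) (c : Fin N → ℝ) (hc : ∀ k, 0 < c k)
    (h1 : ∏ k, c k < 1) :
    ∃ x : ℝ, 0 < x ∧ ∏ k, (x + c k) = 1 ∧
      ∀ y : ℝ, 0 ≤ y → ∏ k, (y + c k) = 1 → y = x := by
  have hne : (Finset.univ : Finset (Fin N)).Nonempty := by
    simpa [Finset.univ_nonempty_iff] using Fin.pos_iff_nonempty.1 hN
  set f : ℝ → ℝ := fun x => ∏ k, (x + c k) with hf
  have hcont : Continuous f := by
    apply continuous_finset_prod
    intro i _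
    exact continuous_id.add continuous_const
  have hmono : StrictMonoOn f (Set.Ici 0) := by
    intro a ha b hb hab
    apply Finset.prod_lt_prod_of_nonempty
    · intro i _; have := hc i; simp only [Set.mem_Ici] at ha; linarith
    · intro i _; linarith
    · exact hne
  have hf0 : f 0 < 1 := by simpa [hf] using h1
  have hf1 : 1 < f 1 := by
    have : ∏ _k : Fin N, (1:ℝ) < ∏ k, ((1:ℝ) + c k) :=
      Finset.prod_lt_prod_of_nonempty (fun i _ => one_pos)
        (fun i _ => by have := hc i; linarith) hne
    simpa using this
  obtain ⟨x, hx, hfx⟩ := intermediate_value_Ioo (le_of_lt one_pos) hcont.continuousOn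
    (Set.mem_Ioo.2 ⟨hf0, hf1⟩)
  refine ⟨x, hx.1, hfx, ?_⟩
  intro y hy hfy
  rcases lt_trichotomy y x with h | h | h
  · exact absurd (hmono hy (le_of_lt hx.1) h) (by rw [show f y = 1 from hfy, hfx]; simp)
  · exact h
  · exact absurd (hmono (le_of_lt hx.1) hy h) (by rw [show f y = 1 from hfy, hfx]; simp)

noncomputable def Pr {n : ℕ} (c : Fin n → ℝ) : Polynomial ℝ :=
  ∏ k, (X + C (c k))

lemma Pc_eq_map {n : ℕ} (c : Fin n → ℝ) : Pc c = (Pr c).map (algebraMap ℝ ℂ) := by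
  simp [Pc, Pr, Polynomial.map_prod]

lemma eval_Pc {n : ℕ} (c : Fin n → ℝ) (z : ℂ) : eval z (Pc c) = ∏ k, (z + (c k : ℂ)) := by
  simp [Pc, eval_prod]

lemma eval_map_real (q : Polynomial ℝ) (x : ℝ) :
    eval (x : ℂ) (q.map (algebraMap ℝ ℂ)) = ((eval x q : ℝ) : ℂ) := by
  rw [eval_map, show ((x:ℂ)) = algebraMap ℝ ℂ x from rfl, eval₂_at_apply]
  rfl

lemma Pc_sub_one_ne_zero {n : ℕ} (hn : 0 < n) (c : Fin n → ℝ) : Pc c - 1 ≠ 0 := by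
  intro h
  have h1 : Pc c = 1 := by linear_combination (norm := ring_nf) h
  have h2 : (Pc c).natDegree = n := by
    rw [Pc, natDegree_prod _ _ (fun i _ => X_add_C_ne_zero _)]
    simp [natDegree_X_add_C]
  rw [h1] at h2
  simp at h2
  omega


lemma deriv_eval_nonneg : ∀ (N : ℕ) (c : Fin N → ℝ), (∀ k, 0 < c k) → ∀ x : ℝ, 0 ≤ x →
    0 ≤ eval x (derivative (∏ k, (X + C (c k)))) := by
  intro N
  induction N with
  | zero => intro c hc x hx; simp
  | succ n ih =>
    intro c hc x hx
    rw [Fin.prod_univ_succ, derivative_mul]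
    simp only [derivative_add, derivative_X, derivative_C, add_zero, eval_add, eval_mul, eval_one,
      one_mul, eval_X, eval_C]
    have h1 : 0 ≤ eval x (∏ k : Fin n, (X + C (c k.succ))) := by
      rw [eval_prod]
      apply Finset.prod_nonneg
      intro i _
      simp only [eval_add, eval_X, eval_C]
      have := hc i.succ; linarith
    have h2 : 0 ≤ eval x (derivative (∏ k : Fin n, (X + C (c k.succ)))) :=
      ih (fun k => c k.succ) (fun k => hc k.succ) x hx
    have h3 : 0 < x + c 0 := by have := hc 0; linarith
    positivity

lemma deriv_eval_pos (N : ℕ) (c : Fin (N+1) → ℝ) (hc : ∀ k, 0 < c k) (x : ℝ) (hx : 0 ≤ x) :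
    0 < eval x (derivative (∏ k, (X + C (c k)))) := by
  rw [Fin.prod_univ_succ, derivative_mul]
  simp only [derivative_add, derivative_X, derivative_C, add_zero, eval_add, eval_mul, eval_one,
    one_mul, eval_X, eval_C]
  have h1 : 0 < eval x (∏ k : Fin N, (X + C (c k.succ))) := by
    rw [eval_prod]
    apply Finset.prod_pos
    intro i _
    simp only [eval_add, eval_X, eval_C]
    have := hc i.succ; linarith
  have h2 : 0 ≤ eval x (derivative (∏ k : Fin N, (X + C (c k.succ)))) :=
    deriv_eval_nonneg N (fun k => c k.succ) (fun k => hc k.succ) x hx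
  have h3 : 0 < x + c 0 := by have := hc 0; linarith
  positivity

lemma mult_one {n : ℕ} (c : Fin (n+1) → ℝ) (hc : ∀ k, 0 < c k) (x : ℝ) (hx : 0 ≤ x)
    (hroot : ∏ k, (x + c k) = 1) :
    rootMultiplicity ((x : ℝ) : ℂ) (Pc c - 1) = 1 := by
  have hp : Pc c - 1 ≠ 0 := Pc_sub_one_ne_zero (Nat.succ_pos n) c
  have hisroot : IsRoot (Pc c - 1) ((x:ℝ):ℂ) := by
    simp only [IsRoot, eval_sub, eval_one, eval_Pc]
    have : (∏ k, ((x:ℂ) + (c k : ℂ))) = ((∏ k, (x + c k) : ℝ) : ℂ) := by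
      push_cast; rfl
    rw [this, hroot]
    simp
  have hge : 1 ≤ rootMultiplicity ((x:ℝ):ℂ) (Pc c - 1) :=
    (rootMultiplicity_pos hp).2 hisroot
  have hlt : ¬ 1 < rootMultiplicity ((x:ℝ):ℂ) (Pc c - 1) := by
    rw [one_lt_rootMultiplicity_iff_isRoot hp]
    rintro ⟨-, hder⟩
    have hd : derivative (Pc c - 1) = (derivative (Pr c)).map (algebraMap ℝ ℂ) := by
      rw [derivative_sub, derivative_one, sub_zero, Pc_eq_map, derivative_map]
    rw [IsRoot, hd, eval_map_real] at hder
    have : eval x (derivative (Pr c)) = 0 := by exact_mod_cast hder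
    have hpos := deriv_eval_pos n c hc x hx
    rw [show (∏ k, (X + C (c k))) = Pr c from rfl] at hpos
    exact hpos.ne' this
  omega

/-- let `n = m + 2 ≥ 5`, let `c' ∈ (0,∞)^{n−2}` be arbitrary and
`γ ∈ (0,1)`. Then there exist `d₀, d_q > 0` with
`d₀ · (∏ⱼ c'ⱼ) · d_q = γⁿ` such that the extended vector
`c = (d₀, c'₁, …, c'_{n−2}, d_q)` satisfies `ν₊(c) = ν̄(c) = 1`. -/
theorem stmt15 (m : ℕ) (hm : 5 ≤ m + 2) (c' : Fin m → ℝ) (hc' : ∀ j, 0 < c' j)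
    (γ : ℝ) (hγ0 : 0 < γ) (hγ1 : γ < 1) :
    ∃ d0 dq : ℝ, 0 < d0 ∧ 0 < dq ∧
      d0 * (∏ j, c' j) * dq = γ ^ (m + 2) ∧
      nuPlus (Fin.cons d0 (Fin.snoc c' dq) : Fin (m + 2) → ℝ) = 1 ∧
      nuBar (Fin.cons d0 (Fin.snoc c' dq) : Fin (m + 2) → ℝ) = 1 := by
  have hm3 : 3 ≤ m := by omega
  haveI : Nonempty (Fin m) := ⟨⟨0, by omega⟩⟩
  set Q := ∏ j, c' j with hQdef
  have hQ : 0 < Q := Finset.prod_pos (fun j _ => hc' j)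
  set s0 : ℝ := min 1 (Finset.univ.inf' Finset.univ_nonempty c') with hs0def
  have hs0pos : 0 < s0 := lt_min one_pos (by rw [Finset.lt_inf'_iff]; exact fun j _ => hc' j)
  have hs0le1 : s0 ≤ 1 := min_le_left _ _
  have hs0lec : ∀ j, s0 ≤ c' j := fun j =>
    le_trans (min_le_right _ _) (Finset.inf'_le _ (Finset.mem_univ j))
  have hπ := Real.pi_pos
  set ε : ℝ := s0 / (2 * (m+1) * Real.pi) with hεdef
  have hε : 0 < ε := by positivity
  set d0 : ℝ := 1 + (1/ε)^(m+1) with hd0def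
  have hd0pos : 0 < d0 := by positivity
  have hd0ge1 : 1 ≤ d0 := by
    rw [hd0def]; have : 0 < (1/ε)^(m+1) := by positivity
    linarith
  have hd0geE : 1 / ε^(m+1) ≤ d0 := by
    have h : (1/ε)^(m+1) = 1/ε^(m+1) := by rw [div_pow, one_pow]
    rw [hd0def, h]; linarith
  set dq : ℝ := γ^(m+2) / (d0 * Q) with hdqdef
  have hdq : 0 < dq := by positivity
  have hprodeq : d0 * Q * dq = γ^(m+2) := by
    rw [hdqdef]; field_simp
  set c : Fin (m+2) → ℝ := Fin.cons d0 (Fin.snoc c' dq) with hcdef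
  have hc : ∀ k, 0 < c k := by
    intro k
    refine Fin.cases ?_ (fun i => ?_) k
    · simpa [hcdef] using hd0pos
    · rw [hcdef, Fin.cons_succ]
      refine Fin.lastCases ?_ (fun j => ?_) i
      · simpa using hdq
      · simpa using hc' j
  have hprodc : ∏ k, c k = γ^(m+2) := by
    rw [hcdef, Fin.prod_univ_succ]
    simp only [Fin.cons_zero, Fin.cons_succ]
    rw [Fin.prod_univ_castSucc]
    simp only [Fin.snoc_castSucc, Fin.snoc_last]
    rw [← hQdef] at *
    rw [← mul_assoc]
    exact hprodeq
  have hlt1 : ∏ k, c k < 1 := by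
    rw [hprodc]
    exact pow_lt_one₀ hγ0.le hγ1 (by omega)
  obtain ⟨x, hxpos, hxroot, hxuniq⟩ := real_root_lemma (m+2) (by omega) c hc hlt1
  -- hypotheses for no_root_im_pos with N = m + 1
  have hεdef' : ε = s0 / (2 * ((m+1 : ℕ):ℝ) * Real.pi) := by
    rw [hεdef]; push_cast; ring
  have hlarge : ∀ k : Fin (m+2), k ≠ Fin.last (m+1) → s0 ≤ c k := by
    intro k
    refine Fin.cases ?_ (fun i => ?_) k
    · intro _
      rw [hcdef, Fin.cons_zero]; linarith
    · intro hk'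
      rw [hcdef, Fin.cons_succ]
      have hi : i ≠ Fin.last m := by
        intro h
        apply hk'
        rw [h, Fin.succ_last]
      rcases Fin.eq_castSucc_or_eq_last i with ⟨j, rfl⟩ | rfl
      · rw [Fin.snoc_castSucc]; exact hs0lec j
      · exact absurd rfl hi
  have hd0E : 1 / ε^(m+1) ≤ c 0 := by
    rw [hcdef, Fin.cons_zero]; exact hd0geE
  have hnoim : ∀ z : ℂ, 0 ≤ z.re → 0 < z.im → (∏ k, (z + ((c k : ℝ):ℂ))) = 1 → False :=
    fun z hre him hprod => no_root_im_pos (m+1) (by omega) c hc s0 ε hs0pos hεdef'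
      hlarge hd0E z hre him hprod
  have hp : Pc c - 1 ≠ 0 := Pc_sub_one_ne_zero (by omega) c
  have key : ∀ z : ℂ, 0 ≤ z.re → (Pc c - 1).IsRoot z → z = ((x:ℝ):ℂ) := by
    intro z hre hroot
    have hev : ∏ k, (z + ((c k : ℝ):ℂ)) = 1 := by
      have : eval z (Pc c) - 1 = 0 := by simpa [IsRoot] using hroot
      rw [eval_Pc] at this
      exact sub_eq_zero.1 this
    by_cases him : z.im = 0
    · have hz : z = ((z.re : ℝ):ℂ) := by
        apply Complex.ext <;> simp [him]
      have hreal : ∏ k, (z.re + c k) = 1 := by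
        rw [hz] at hev
        have h2 : ((∏ k, (z.re + c k) : ℝ) : ℂ) = 1 := by
          rw [← hev]; push_cast; rfl
        exact_mod_cast h2
      rw [hz]
      exact_mod_cast congrArg (fun t : ℝ => ((t:ℝ):ℂ)) (hxuniq z.re hre hreal)
    · rcases lt_or_gt_of_ne him with hlt | hgt
      · exfalso
        apply hnoim (starRingEnd ℂ z)
        · simpa using hre
        · simpa using hlt
        · have h2 := congrArg (starRingEnd ℂ) hev
          rw [map_prod] at h2
          simpa using h2
      · exact (hnoim z hre hgt hev).elim
  have hmult : rootMultiplicity ((x:ℝ):ℂ) (Pc c - 1) = 1 := by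
    have := mult_one (n := m+1) c hc x hxpos.le hxroot
    exact this
  have hxre : (((x:ℝ):ℂ)).re = x := by simp
  have hxisroot : (Pc c - 1).IsRoot ((x:ℝ):ℂ) := by
    simp only [IsRoot, eval_sub, eval_one, eval_Pc]
    have h2 : (∏ k, ((x:ℂ) + ((c k : ℝ):ℂ))) = ((∏ k, (x + c k) : ℝ) : ℂ) := by
      push_cast; rfl
    rw [h2, hxroot]
    simp
  have hcount : ∀ (pr : ℂ → Prop) (inst : DecidablePred pr), pr ((x:ℝ):ℂ) →
      (∀ z, pr z → 0 ≤ z.re) →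
      Multiset.card (@Multiset.filter ℂ pr inst (Pc c - 1).roots) = 1 := by
    intro pr inst hprx hpr
    have hfeq : @Multiset.filter ℂ pr inst (Pc c - 1).roots =
        Multiset.filter (fun z => ((x:ℝ):ℂ) = z) (Pc c - 1).roots := by
      apply Multiset.filter_congr
      intro z hz
      have hzroot : (Pc c - 1).IsRoot z := (Polynomial.mem_roots hp).1 hz
      constructor
      · intro h
        exact (key z (hpr z h) hzroot).symm
      · intro h
        rw [← h]
        exact hprx
    rw [hfeq, ← Multiset.count_eq_card_filter_eq, Polynomial.count_roots, hmult]
  refine ⟨d0, dq, hd0pos, hdq, hprodeq, ?_, ?_⟩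
  · show Multiset.card (Multiset.filter (fun z => 0 < z.re) (Pc c - 1).roots) = 1
    exact hcount _ _ (by simpa using hxpos) (fun z hz => hz.le)
  · show Multiset.card (Multiset.filter (fun z => 0 ≤ z.re) (Pc c - 1).roots) = 1
    exact hcount _ _ (by simpa using hxpos.le) (fun z hz => hz)
end

section
/- Let 1/2 ≤ γ < 1 and let D_*, D^* be positive reals with D_* ≤ γ ≤ D^*. Let c = (c_1,…,c_n) ∈ [D_*, D^*]^n satisfy ∏_{k=1}^n c_k = γ^n, and let z = x + iy (x, y real) be a root of P(z; c) = 1 with x ≥ 0. Then: (i) x²/(1 − γ)² + y²/(1 − γ) ≥ (3/4) D_*²; (ii) |z| ≥ (4/5) D_* (1 − γ); and (iii) |z| ≤ (3/2) (1 − γ)^{1/2}. In particular, z lies in the closed annulus {w : (4/5) D_* (1 − γ) ≤ |w| ≤ (3/2)(1 − γ)^{1/2}}. -/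
open Polynomial

lemma mahler_aux (n : ℕ) (hn : 1 ≤ n) (c : Fin n → ℝ) (hc : ∀ k, 0 < c k)
    (b γ : ℝ) (hb : 0 ≤ b) (hγ : 0 < γ) (hg : ∏ k, c k = γ ^ n) :
    (γ ^ 2 + b) ^ n ≤ ∏ k, ((c k) ^ 2 + b) := by
  have hn0 : (n : ℝ) ≠ 0 := Nat.cast_ne_zero.mpr (by omega)
  set A : Fin n → ℝ := fun k => (c k) ^ 2 + b with hA
  have hApos : ∀ k, 0 < A k := fun k => by have := hc k; positivity
  set P : ℝ := ∏ k, A k with hPdef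
  have hPpos : 0 < P := Finset.prod_pos fun k _ => hApos k
  set w : ℝ := 1 / n with hw
  have hwpos : 0 < w := by positivity
  have hwsum : ∑ _k : Fin n, w = 1 := by
    simp [hw, Finset.card_univ]
    field_simp
  -- AM-GM for (c k)^2 / A k
  have h1 : ∏ k, ((c k) ^ 2 / A k) ^ w ≤ ∑ k, w * ((c k) ^ 2 / A k) :=
    Real.geom_mean_le_arith_mean_weighted _ _ _ (fun i _ => le_of_lt hwpos) hwsum
      (fun i _ => by positivity)
  have h2 : ∏ k, (b / A k) ^ w ≤ ∑ k, w * (b / A k) :=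
    Real.geom_mean_le_arith_mean_weighted _ _ _ (fun i _ => le_of_lt hwpos) hwsum
      (fun i _ => by positivity)
  have hsum : (∑ k, w * ((c k) ^ 2 / A k)) + (∑ k, w * (b / A k)) = 1 := by
    rw [← Finset.sum_add_distrib]
    have : ∀ k : Fin n, w * ((c k) ^ 2 / A k) + w * (b / A k) = w := by
      intro k
      have := (hApos k).ne'
      field_simp [hA]; ring
    simp_rw [this]
    exact hwsum
  -- compute geometric means
  have hprod1 : ∏ k, ((c k) ^ 2 / A k) ^ w = γ ^ 2 / P ^ w := by
    rw [Real.finset_prod_rpow _ _ (fun i _ => by positivity) w]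
    rw [Finset.prod_div_distrib]
    rw [Finset.prod_pow, hg, ← pow_mul]
    rw [Real.div_rpow (by positivity) (le_of_lt hPpos)]
    congr 1
    rw [← Real.rpow_natCast γ (n*2), ← Real.rpow_natCast γ 2,
      ← Real.rpow_mul (le_of_lt hγ)]
    congr 1
    rw [hw]
    push_cast
    field_simp
  have hprod2 : ∏ k, (b / A k) ^ w = b / P ^ w := by
    rw [Real.finset_prod_rpow _ _ (fun i _ => by positivity) w]
    rw [Finset.prod_div_distrib, Finset.prod_const, Finset.card_univ, Fintype.card_fin]
    rw [Real.div_rpow (by positivity) (le_of_lt hPpos)]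
    congr 1
    rw [← Real.rpow_natCast b n, ← Real.rpow_mul hb]
    rw [mul_one_div, div_self hn0, Real.rpow_one]
  have hPw : 0 < P ^ w := Real.rpow_pos_of_pos hPpos w
  have key : γ ^ 2 + b ≤ P ^ w := by
    have : γ ^ 2 / P ^ w + b / P ^ w ≤ 1 := by
      rw [← hprod1, ← hprod2]
      linarith [h1, h2, hsum.le]
    rw [← add_div, div_le_one hPw] at this
    exact this
  calc (γ ^ 2 + b) ^ n ≤ (P ^ w) ^ n := by
        apply pow_le_pow_left₀ (by positivity) key
      _ = P := by
        rw [← Real.rpow_natCast (P ^ w) n, ← Real.rpow_mul (le_of_lt hPpos)]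
        rw [hw, one_div, inv_mul_cancel₀ hn0, Real.rpow_one]

set_option maxHeartbeats 1000000 in
/-- with `1/2 ≤ γ < 1`, `0 < D_* ≤ γ ≤ D^*`,
`c ∈ [D_*, D^*]ⁿ` with `∏ₖ cₖ = γⁿ`, and `z = x + iy` a root of `P(z; c) = 1`
with `x ≥ 0`: (i) `x²/(1−γ)² + y²/(1−γ) ≥ (3/4)D_*²`;
(ii) `|z| ≥ (4/5)D_*(1−γ)`; (iii) `|z| ≤ (3/2)(1−γ)^{1/2}`. -/
theorem stmt16 (n : ℕ) (hn : 1 ≤ n) (γ Dlo Dhi : ℝ)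
    (hγhalf : 1 / 2 ≤ γ) (hγ1 : γ < 1)
    (hlo : 0 < Dlo) (hloγ : Dlo ≤ γ) (hγhi : γ ≤ Dhi)
    (c : Fin n → ℝ) (hc : ∀ k, Dlo ≤ c k ∧ c k ≤ Dhi) (hg : ∏ k, c k = γ ^ n)
    (z : ℂ) (hz : (Pc c).eval z = 1) (hre : 0 ≤ z.re) :
    3 / 4 * Dlo ^ 2 ≤ z.re ^ 2 / (1 - γ) ^ 2 + z.im ^ 2 / (1 - γ) ∧
    4 / 5 * Dlo * (1 - γ) ≤ ‖z‖ ∧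
    ‖z‖ ≤ 3 / 2 * Real.sqrt (1 - γ) := by
  set x := z.re with hx
  set y := z.im with hy
  have hγ0 : (0:ℝ) < γ := by linarith
  have ha : (0:ℝ) < 1 - γ := by linarith
  have ha2 : 1 - γ ≤ 1/2 := by linarith
  have hn0 : n ≠ 0 := by omega
  have hck : ∀ k, 0 < c k := fun k => lt_of_lt_of_le hlo (hc k).1
  -- the product of norms
  have h1 : ∏ k, (z + (c k : ℂ)) = 1 := by
    rw [Pc, eval_prod] at hz
    simpa using hz
  have hprod : ∏ k, ((x + c k) ^ 2 + y ^ 2) = 1 := by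
    have h2 := congrArg Complex.normSq h1
    rw [map_prod, map_one] at h2
    rw [← h2]
    apply Finset.prod_congr rfl
    intro k _
    simp [Complex.normSq_apply, Complex.add_re, Complex.add_im]
    ring
  set S : ℝ := 2 * x / Dlo + y ^ 2 / Dlo ^ 2 with hSdef
  -- Key inequality 1 : 2(1-γ) ≤ S
  have hK1 : 2 * (1 - γ) ≤ S := by
    have hfac : ∀ k : Fin n, (x + c k) ^ 2 + y ^ 2 ≤ (c k) ^ 2 * Real.exp S := by
      intro k
      obtain ⟨hk1, hk2⟩ := hc k
      have hckp := hck k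
      have hxD : 0 ≤ 2 * x / Dlo := by positivity
      have e1 : x + c k ≤ c k * Real.exp (x / Dlo) := by
        have hle : x / c k ≤ x / Dlo := div_le_div_of_nonneg_left hre hlo hk1
        have h2 : 1 + x / c k ≤ Real.exp (x / c k) := by
          linarith [Real.add_one_le_exp (x / c k)]
        calc x + c k = c k * (1 + x / c k) := by field_simp; ring
          _ ≤ c k * Real.exp (x / c k) := by
              exact mul_le_mul_of_nonneg_left h2 hckp.le
          _ ≤ c k * Real.exp (x / Dlo) := by
              exact mul_le_mul_of_nonneg_left (Real.exp_le_exp.mpr hle) hckp.le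
      have hexp : Real.exp (x / Dlo) ^ 2 = Real.exp (2 * x / Dlo) := by
        rw [sq, ← Real.exp_add]; ring_nf
      have e1' : (x + c k) ^ 2 ≤ (c k) ^ 2 * Real.exp (2 * x / Dlo) := by
        have hxc : 0 ≤ x + c k := by linarith
        calc (x + c k) ^ 2 ≤ (c k * Real.exp (x / Dlo)) ^ 2 := by
              exact pow_le_pow_left₀ hxc e1 2
          _ = (c k) ^ 2 * Real.exp (2 * x / Dlo) := by rw [mul_pow, hexp]
      have h3 : Dlo ^ 2 ≤ (c k) ^ 2 * Real.exp (2 * x / Dlo) := by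
        nlinarith [Real.one_le_exp hxD]
      have e2 : y ^ 2 ≤ (c k) ^ 2 * Real.exp (2 * x / Dlo) * (y ^ 2 / Dlo ^ 2) := by
        calc y ^ 2 = y ^ 2 / Dlo ^ 2 * Dlo ^ 2 := by field_simp
          _ ≤ y ^ 2 / Dlo ^ 2 * ((c k) ^ 2 * Real.exp (2 * x / Dlo)) := by
              exact mul_le_mul_of_nonneg_left h3 (by positivity)
          _ = (c k) ^ 2 * Real.exp (2 * x / Dlo) * (y ^ 2 / Dlo ^ 2) := by ring
      have e3 : 1 + y ^ 2 / Dlo ^ 2 ≤ Real.exp (y ^ 2 / Dlo ^ 2) := by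
        linarith [Real.add_one_le_exp (y ^ 2 / Dlo ^ 2)]
      have hES : Real.exp (2 * x / Dlo) * Real.exp (y ^ 2 / Dlo ^ 2) = Real.exp S := by
        rw [← Real.exp_add]
      calc (x + c k) ^ 2 + y ^ 2
          ≤ (c k) ^ 2 * Real.exp (2 * x / Dlo) * (1 + y ^ 2 / Dlo ^ 2) := by
            have expand : (c k) ^ 2 * Real.exp (2 * x / Dlo) * (1 + y ^ 2 / Dlo ^ 2)
                = (c k) ^ 2 * Real.exp (2 * x / Dlo)
                  + (c k) ^ 2 * Real.exp (2 * x / Dlo) * (y ^ 2 / Dlo ^ 2) := by ring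
            rw [expand]
            exact add_le_add e1' e2
        _ ≤ (c k) ^ 2 * Real.exp (2 * x / Dlo) * Real.exp (y ^ 2 / Dlo ^ 2) := by
            exact mul_le_mul_of_nonneg_left e3 (by positivity)
        _ = (c k) ^ 2 * Real.exp S := by rw [mul_assoc, hES]
    have hbig : (1:ℝ) ≤ (γ ^ 2 * Real.exp S) ^ n := by
      have := Finset.prod_le_prod (s := (Finset.univ : Finset (Fin n)))
        (f := fun k : Fin n => (x + c k) ^ 2 + y ^ 2)
        (g := fun k : Fin n => (c k) ^ 2 * Real.exp S)
        (fun k _ => by positivity) (fun k _ => hfac k)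
      rw [hprod] at this
      calc (1:ℝ) ≤ ∏ k, ((c k) ^ 2 * Real.exp S) := this
        _ = (γ ^ 2 * Real.exp S) ^ n := by
            rw [Finset.prod_mul_distrib, Finset.prod_pow, hg, Finset.prod_const,
              Finset.card_univ, Fintype.card_fin, mul_pow, ← pow_mul, ← pow_mul, mul_comm 2 n]
    have hone : (1:ℝ) ≤ γ ^ 2 * Real.exp S := by
      have : (1:ℝ) ^ n ≤ (γ ^ 2 * Real.exp S) ^ n := by rwa [one_pow]
      exact le_of_pow_le_pow_left₀ hn0 (by positivity) this
    have hγe : γ * Real.exp (1 - γ) ≤ 1 := by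
      have hlog : Real.log γ ≤ γ - 1 := Real.log_le_sub_one_of_pos hγ0
      have : γ * Real.exp (1 - γ) = Real.exp (Real.log γ + (1 - γ)) := by
        rw [Real.exp_add, Real.exp_log hγ0]
      rw [this]
      calc Real.exp (Real.log γ + (1 - γ)) ≤ Real.exp 0 := by
            apply Real.exp_le_exp.mpr; linarith
        _ = 1 := Real.exp_zero
    have hee : Real.exp (2 * (1 - γ)) ≤ Real.exp S := by
      have h5 : Real.exp (2 * (1 - γ)) = Real.exp (1 - γ) ^ 2 := by
        rw [sq, ← Real.exp_add]; ring_nf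
      have hA : γ ^ 2 * Real.exp (1 - γ) ^ 2 ≤ 1 := by
        have h := mul_self_le_mul_self (by positivity : (0:ℝ) ≤ γ * Real.exp (1 - γ)) hγe
        nlinarith [h]
      have hB : γ ^ 2 * Real.exp (1 - γ) ^ 2 ≤ γ ^ 2 * Real.exp S := le_trans hA hone
      have hC := (mul_le_mul_iff_right₀ (by positivity : (0:ℝ) < γ ^ 2)).mp hB
      rw [h5]
      exact hC
    exact Real.exp_le_exp.mp hee
  -- core inequality: x^2 + (1-γ)*y^2 ≥ (1-γ)^2 * Dlo^2
  have hcore : (1 - γ) ^ 2 * Dlo ^ 2 ≤ x ^ 2 + (1 - γ) * y ^ 2 := by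
    have hS' : 2 * (1 - γ) * ((1 - γ) * Dlo ^ 2) ≤
        (2 * x / Dlo + y ^ 2 / Dlo ^ 2) * ((1 - γ) * Dlo ^ 2) := by
      apply mul_le_mul_of_nonneg_right hK1 (by positivity)
    have h6 : (2 * x / Dlo + y ^ 2 / Dlo ^ 2) * ((1 - γ) * Dlo ^ 2)
        = 2 * x * (1 - γ) * Dlo + y ^ 2 * (1 - γ) := by field_simp
    rw [h6] at hS'
    nlinarith [sq_nonneg (x - (1 - γ) * Dlo)]
  -- Key inequality 2 : γ^2 + |z|^2 ≤ 1
  have hK2 : γ ^ 2 + (x ^ 2 + y ^ 2) ≤ 1 := by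
    have hfac : ∀ k : Fin n, (c k) ^ 2 + (x ^ 2 + y ^ 2) ≤ (x + c k) ^ 2 + y ^ 2 := by
      intro k
      nlinarith [hck k, hre]
    have hP : ∏ k, ((c k) ^ 2 + (x ^ 2 + y ^ 2)) ≤ 1 := by
      rw [← hprod]
      apply Finset.prod_le_prod (fun k _ => by have := hck k; positivity) (fun k _ => hfac k)
    have hM : (γ ^ 2 + (x ^ 2 + y ^ 2)) ^ n ≤ ∏ k, ((c k) ^ 2 + (x ^ 2 + y ^ 2)) :=
      mahler_aux n hn c hck (x ^ 2 + y ^ 2) γ (by positivity) hγ0 hg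
    have : (γ ^ 2 + (x ^ 2 + y ^ 2)) ^ n ≤ 1 ^ n := by rw [one_pow]; exact hM.trans hP
    exact le_of_pow_le_pow_left₀ hn0 (by norm_num) this
  have habs : ‖z‖ = Real.sqrt (x ^ 2 + y ^ 2) := by
    rw [Complex.norm_def, Complex.normSq_apply, ← hx, ← hy]
    ring_nf
  refine ⟨?_, ?_, ?_⟩
  · -- part (i)
    have h7 : x ^ 2 / (1 - γ) ^ 2 + y ^ 2 / (1 - γ) = (x ^ 2 + (1 - γ) * y ^ 2) / (1 - γ) ^ 2 := by
      field_simp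
    rw [h7, le_div_iff₀ (by positivity)]
    nlinarith [hcore, sq_nonneg Dlo, sq_nonneg (1 - γ)]
  · -- part (ii)
    rw [habs]
    rw [show (4:ℝ) / 5 * Dlo * (1 - γ) = Real.sqrt ((4 / 5 * Dlo * (1 - γ)) ^ 2) from
      (Real.sqrt_sq (by positivity)).symm]
    apply Real.sqrt_le_sqrt
    nlinarith [hcore, sq_nonneg y, sq_nonneg ((1 - γ) * Dlo)]
  · -- part (iii)
    rw [habs]
    have h8 : x ^ 2 + y ^ 2 ≤ (3 / 2) ^ 2 * (1 - γ) := by nlinarith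
    calc Real.sqrt (x ^ 2 + y ^ 2) ≤ Real.sqrt ((3 / 2) ^ 2 * (1 - γ)) := Real.sqrt_le_sqrt h8
      _ = 3 / 2 * Real.sqrt (1 - γ) := by
          rw [Real.sqrt_mul (by positivity), Real.sqrt_sq (by norm_num)]
end

section
/- Let c = (c_1,…,c_n) ∈ (0,∞)^n have geometric mean γ = (∏_{k=1}^n c_k)^{1/n} with 0 < γ < 1. Then every root z ∈ ℂ of P(z; c) = 1 with Re z ≥ 0 satisfies |z|² ≤ 1 − γ². -/
open Polynomial

/-- if `c ∈ (0,∞)ⁿ` has geometric mean `γ ∈ (0,1)`, then every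
root `z` of `P(z; c) = 1` with `Re z ≥ 0` satisfies `|z|² ≤ 1 − γ²`. -/
theorem stmt17 (n : ℕ) (hn : 1 ≤ n) (c : Fin n → ℝ) (hc : ∀ k, 0 < c k)
    (γ : ℝ) (hγ0 : 0 < γ) (hγ1 : γ < 1) (hg : ∏ k, c k = γ ^ n)
    (z : ℂ) (hz : (Pc c).eval z = 1) (hre : 0 ≤ z.re) :
    ‖z‖ ^ 2 ≤ 1 - γ ^ 2 := by
  have habs : ∏ k, ‖z + (c k : ℂ)‖ = 1 := by
    have h := congrArg (‖·‖) hz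
    simpa [Pc, eval_prod, map_prod, norm_prod] using h
  set x := ‖z‖ ^ 2 with hx
  have hx0 : 0 ≤ x := sq_nonneg _
  have hstep2 : ∀ k, x + (c k) ^ 2 ≤ ‖z + (c k : ℂ)‖ ^ 2 := by
    intro k
    rw [Complex.sq_norm, Complex.normSq_apply]
    have hxre : x = z.re ^ 2 + z.im ^ 2 := by
      rw [hx, Complex.sq_norm, Complex.normSq_apply]; ring
    simp only [Complex.add_re, Complex.add_im, Complex.ofReal_re, Complex.ofReal_im]
    nlinarith [hc k]
  set t : Fin n → ℝ := fun k => x + (c k) ^ 2 with ht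
  have ht0 : ∀ k, 0 < t k := fun k =>
    add_pos_of_nonneg_of_pos hx0 (pow_pos (hc k) 2)
  have hS0 : 0 < ∏ k, t k := Finset.prod_pos fun k _ => ht0 k
  have hS1 : ∏ k, t k ≤ 1 := by
    calc ∏ k, t k ≤ ∏ k, ‖z + (c k : ℂ)‖ ^ 2 :=
          Finset.prod_le_prod (fun k _ => (ht0 k).le) (fun k _ => hstep2 k)
      _ = (∏ k, ‖z + (c k : ℂ)‖) ^ 2 := by rw [Finset.prod_pow]
      _ = 1 := by rw [habs]; norm_num
  have hn0 : (0 : ℝ) < n := by exact_mod_cast hn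
  set w : ℝ := 1 / n with hw
  have hw0 : 0 ≤ w := by positivity
  have hsum : ∑ _k : Fin n, w = 1 := by
    simp [hw, Finset.sum_const, Finset.card_univ]
    field_simp
  have hSw0 : 0 < (∏ k, t k) ^ w := Real.rpow_pos_of_pos hS0 w
  -- AM-GM for x / t k
  have hA : x / (∏ k, t k) ^ w ≤ ∑ k, w * (x / t k) := by
    have h := Real.geom_mean_le_arith_mean_weighted Finset.univ
      (fun _ : Fin n => w) (fun k => x / t k) (fun _ _ => hw0) hsum
      (fun k _ => div_nonneg hx0 (ht0 k).le)
    have hL : ∏ k : Fin n, (x / t k) ^ w = x / (∏ k, t k) ^ w := by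
      rw [Real.finset_prod_rpow _ _ (fun k _ => div_nonneg hx0 (ht0 k).le)]
      rw [Finset.prod_div_distrib, Finset.prod_const, Finset.card_univ, Fintype.card_fin]
      rw [Real.div_rpow (pow_nonneg hx0 n) hS0.le]
      congr 1
      rw [← Real.rpow_natCast x n, ← Real.rpow_mul hx0]
      rw [hw]
      field_simp
      simp
    rwa [hL] at h
  -- AM-GM for c k ^ 2 / t k
  have hB : γ ^ 2 / (∏ k, t k) ^ w ≤ ∑ k, w * ((c k) ^ 2 / t k) := by
    have h := Real.geom_mean_le_arith_mean_weighted Finset.univ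
      (fun _ : Fin n => w) (fun k => (c k) ^ 2 / t k) (fun _ _ => hw0) hsum
      (fun k _ => div_nonneg (sq_nonneg _) (ht0 k).le)
    have hc2 : ∏ k, (c k) ^ 2 = (γ ^ 2) ^ n := by
      rw [Finset.prod_pow, hg, ← pow_mul, ← pow_mul, Nat.mul_comm]
    have hL : ∏ k : Fin n, ((c k) ^ 2 / t k) ^ w = γ ^ 2 / (∏ k, t k) ^ w := by
      rw [Real.finset_prod_rpow _ _ (fun k _ => div_nonneg (sq_nonneg _) (ht0 k).le)]
      rw [Finset.prod_div_distrib, hc2]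
      rw [Real.div_rpow (pow_nonneg (sq_nonneg γ) n) hS0.le]
      congr 1
      rw [← Real.rpow_natCast (γ ^ 2) n, ← Real.rpow_mul (sq_nonneg γ)]
      rw [hw]
      field_simp
      simp
    rwa [hL] at h
  have hsum1 : ∑ k, w * (x / t k) + ∑ k, w * ((c k) ^ 2 / t k) = 1 := by
    rw [← Finset.sum_add_distrib]
    have : ∀ k : Fin n, w * (x / t k) + w * ((c k) ^ 2 / t k) = w := by
      intro k
      rw [← mul_add, ← add_div, div_self (ht0 k).ne']
      ring
    simp only [this]
    exact hsum
  have hkey : (x + γ ^ 2) / (∏ k, t k) ^ w ≤ 1 := by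
    rw [add_div]
    linarith [hA, hB]
  have hfin : x + γ ^ 2 ≤ (∏ k, t k) ^ w := by
    rw [div_le_one hSw0] at hkey
    exact hkey
  have hle1 : (∏ k, t k) ^ w ≤ 1 := Real.rpow_le_one hS0.le hS1 hw0
  linarith
end
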